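/- For Lebesgue-almost every x ∈ (0,θ), the inequality a_n(x) > n·log n holds for infinitely many n ∈ ℕ₊. -/

import Mathlib

/-!
If `a_n(x) ≤ n log n` for all large `n`, then `a_n(x) ≤ M_n := ⌊n log n⌋ + P + m` for all `n ≥ 1`
and some `P`. For each `J`, the points with such digits and a non-terminating expansion are
covered by the cylinders of the words `k_1 ⋯ k_J` with `m ≤ k_n ≤ M_n`. A cylinder is the image of
`(0, θ)` under a Möbius map with nonnegative coefficients, and its subcylinders with next digit at
most `M` fill at most the fraction `1 - m / (M + 1)` of it. The total length at level `J` is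
therefore at most `θ ∏_{n ≤ J} (1 - m / (M_n + 1))`, which tends to `0` because `∑ 1 / (n log n)`
diverges. The points with a terminating expansion form a countable set.
-/

noncomputable section
open MeasureTheory Filter Set

namespace Theta

/-- θ = 1/√m -/
def th (m : ℕ) : ℝ := 1 / Real.sqrt m

/-- The θ-expansion map T_θ on [0,θ]. -/
def T (m : ℕ) (x : ℝ) : ℝ := if x = 0 then 0 else 1 / x - th m * ⌊1 / (x * th m)⌋₊

/-- The n-th digit a_n(x) (n ≥ 1), a_n(x) = a_1(T_θ^{n-1} x) with a_1(x) = ⌊1/(xθ)⌋. -/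
def a (m n : ℕ) (x : ℝ) : ℕ := ⌊1 / ((T m)^[n - 1] x * th m)⌋₊

/-- Ω: the irrationals in (0,θ). -/
def Omega (m : ℕ) : Set ℝ := {x | x ∈ Set.Ioo 0 (th m) ∧ Irrational x}

/-- Convergent numerators, shifted: `p m x (n+1)` is p_n(x), `p m x 0` is p_{-1} = 1. -/
def p (m : ℕ) (x : ℝ) : ℕ → ℝ
  | 0 => 1
  | 1 => 0
  | n + 2 => (a m (n + 1) x) * th m * p m x (n + 1) + p m x n

/-- Convergent denominators, shifted: `q m x (n+1)` is q_n(x), `q m x 0` is q_{-1} = 0. -/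
def q (m : ℕ) (x : ℝ) : ℕ → ℝ
  | 0 => 0
  | 1 => 1
  | n + 2 => (a m (n + 1) x) * th m * q m x (n + 1) + q m x n

open Real

lemma tendsto_prod_one_sub_of_not_summable {c : ℕ → ℝ} (hc0 : ∀ i, 0 ≤ c i) (hc1 : ∀ i, c i ≤ 1)
    (hc : ¬ Summable c) : Tendsto (fun J => ∏ i ∈ Finset.range J, (1 - c i)) atTop (nhds 0) := by
  have hsum := (not_summable_iff_tendsto_nat_atTop_of_nonneg hc0).1 hc
  refine tendsto_of_tendsto_of_tendsto_of_le_of_le tendsto_const_nhds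
    (tendsto_exp_atBot.comp (tendsto_neg_atTop_atBot.comp hsum)) (fun J => ?_) (fun J => ?_)
  · exact Finset.prod_nonneg fun i _ => sub_nonneg.2 (hc1 i)
  · calc ∏ i ∈ Finset.range J, (1 - c i) ≤ ∏ i ∈ Finset.range J, exp (-c i) :=
          Finset.prod_le_prod (fun i _ => sub_nonneg.2 (hc1 i))
            fun i _ => by linarith [add_one_le_exp (-c i)]
      _ = exp (-∑ i ∈ Finset.range J, c i) := by rw [← exp_sum, Finset.sum_neg_distrib]

lemma log_log_add_one_sub_log_log_le {x : ℝ} (hx : 1 < x) :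
    log (log (x + 1)) - log (log x) ≤ (x * log x)⁻¹ := by
  have hx0 : 0 < x := by linarith
  have hlx : 0 < log x := log_pos hx
  have hlx1 : 0 < log (x + 1) := log_pos (by linarith)
  have hstep : log (x + 1) - log x ≤ x⁻¹ := by
    rw [← log_div (by positivity) hx0.ne']
    calc log ((x + 1) / x) ≤ (x + 1) / x - 1 := log_le_sub_one_of_pos (by positivity)
      _ = x⁻¹ := by field_simp; ring
  rw [← log_div hlx1.ne' hlx.ne']
  calc log (log (x + 1) / log x) ≤ log (x + 1) / log x - 1 :=
        log_le_sub_one_of_pos (div_pos hlx1 hlx)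
    _ = (log (x + 1) - log x) / log x := by field_simp
    _ ≤ x⁻¹ / log x := div_le_div_of_nonneg_right hstep hlx.le
    _ = (x * log x)⁻¹ := by rw [mul_inv, div_eq_mul_inv]

/-- Compared with the telescoping sum of `log (log n)`. -/
lemma not_summable_inv_mul_log : ¬ Summable fun n : ℕ => ((n : ℝ) * log n)⁻¹ := by
  have hnonneg (n : ℕ) : 0 ≤ ((n : ℝ) * log n)⁻¹ :=
    inv_nonneg.2 (mul_nonneg n.cast_nonneg (log_natCast_nonneg n))
  rw [not_summable_iff_tendsto_nat_atTop_of_nonneg hnonneg]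
  set F : ℕ → ℝ := fun n => log (log n)
  have hF : Tendsto F atTop atTop :=
    tendsto_log_atTop.comp (tendsto_log_atTop.comp tendsto_natCast_atTop_atTop)
  refine tendsto_atTop_mono' atTop ?_ (tendsto_atTop_add_const_right _ (-F 2) hF)
  filter_upwards [eventually_ge_atTop 2] with J hJ
  calc F J + -F 2 = ∑ n ∈ Finset.Ico 2 J, (F (n + 1) - F n) := by
        rw [Finset.sum_Ico_sub F hJ]
        ring
    _ ≤ ∑ n ∈ Finset.Ico 2 J, ((n : ℝ) * log n)⁻¹ := Finset.sum_le_sum fun n hn => by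
        have h1n : (1 : ℝ) < n := by exact_mod_cast (Finset.mem_Ico.1 hn).1
        simpa [F] using log_log_add_one_sub_log_log_le h1n
    _ ≤ ∑ n ∈ Finset.range J, ((n : ℝ) * log n)⁻¹ :=
        Finset.sum_le_sum_of_subset_of_nonneg
          (fun n hn => Finset.mem_range.2 (Finset.mem_Ico.1 hn).2) fun n _ _ => hnonneg n

lemma natCast_div_add_one_le_one {m M : ℕ} (h : m ≤ M) : (m / (M + 1 : ℝ)) ≤ 1 := by
  rw [div_le_one (by positivity)]
  exact_mod_cast h.trans M.le_succ

section ThetaExpansion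

variable {m : ℕ}

lemma th_pos (hm : 0 < m) : 0 < th m := by
  unfold th
  have : (0 : ℝ) < m := by exact_mod_cast hm
  positivity

lemma natCast_mul_th_sq (hm : 0 < m) : (m : ℝ) * th m ^ 2 = 1 := by
  have : (0 : ℝ) < m := by exact_mod_cast hm
  rw [th, div_pow, sq_sqrt this.le]
  field_simp

lemma T_apply {x : ℝ} (hx : x ≠ 0) : T m x = 1 / x - th m * a m 1 x := by
  simp [T, a, hx]

lemma le_a_one (hm : 0 < m) {x : ℝ} (hx : x ∈ Ioo 0 (th m)) : m ≤ a m 1 x := by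
  have hθ := th_pos hm
  have hxθ : 0 < x * th m := mul_pos hx.1 hθ
  have : (m : ℝ) ≤ 1 / (x * th m) := by
    rw [le_div_iff₀ hxθ]
    nlinarith [natCast_mul_th_sq hm, hx.2]
  simpa [a] using Nat.le_floor this

lemma T_mem_Ico (hm : 0 < m) {x : ℝ} (hx : x ∈ Ioo 0 (th m)) : T m x ∈ Ico 0 (th m) := by
  have hθ := th_pos hm
  have hxθ : 0 < x * th m := mul_pos hx.1 hθ
  have hfloor : (a m 1 x : ℝ) ≤ 1 / (x * th m) ∧ 1 / (x * th m) < a m 1 x + 1 := by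
    simp only [a, Nat.sub_self, Function.iterate_zero, id_eq]
    exact ⟨Nat.floor_le (by positivity), Nat.lt_floor_add_one _⟩
  have hscale : 1 / (x * th m) * th m = 1 / x := by field_simp
  rw [T_apply hx.1.ne']
  constructor
  · nlinarith [mul_le_mul_of_nonneg_right hfloor.1 hθ.le]
  · nlinarith [mul_lt_mul_of_pos_right hfloor.2 hθ]

/-- The inverse of the branch of `T m` on which the first digit is `k`. -/
def invBranch (m k : ℕ) (t : ℝ) : ℝ := 1 / (k * th m + t)

lemma invBranch_a_one_T {x : ℝ} (hx : x ≠ 0) : invBranch m (a m 1 x) (T m x) = x := by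
  rw [invBranch, T_apply hx]
  ring_nf
  field_simp

end ThetaExpansion

section Cylinders

variable {m : ℕ}

lemma exists_foldr_invBranch_eq_div (hm : 0 < m) :
    ∀ w : List ℕ, (∀ k ∈ w, 0 < k) → ∃ A B C D : ℝ, 0 ≤ A ∧ 0 ≤ B ∧ 0 < C ∧ 0 ≤ D ∧
      ∀ t, 0 ≤ t → w.foldr (invBranch m) t = (A + B * t) / (C + D * t)
  | [], _ => ⟨0, 1, 1, 0, le_rfl, zero_le_one, one_pos, le_rfl, fun t _ => by simp⟩
  | k :: w, hw => by
    obtain ⟨A, B, C, D, hA, hB, hC, hD, hrep⟩ :=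
      exists_foldr_invBranch_eq_div hm w fun j hj => hw j (List.mem_cons_of_mem _ hj)
    have hkθ : 0 < (k : ℝ) * th m :=
      mul_pos (by exact_mod_cast hw k List.mem_cons_self) (th_pos hm)
    refine ⟨C, D, k * th m * C + A, k * th m * D + B, hC.le, hD, by nlinarith [mul_pos hkθ hC],
      by positivity, fun t ht => ?_⟩
    have hden : 0 < C + D * t := by positivity
    rw [List.foldr_cons, hrep t ht, invBranch]
    field_simp
    ring

lemma exists_foldr_invBranch_eq_add_mul (hm : 0 < m) {w : List ℕ} (hw : ∀ k ∈ w, 0 < k) :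
    ∃ c e C D : ℝ, 0 < C ∧ 0 ≤ D ∧
      ∀ t, 0 ≤ t → w.foldr (invBranch m) t = c + e * (t / (C + D * t)) := by
  obtain ⟨A, B, C, D, -, -, hC, hD, hrep⟩ := exists_foldr_invBranch_eq_div hm w hw
  refine ⟨A / C, (B * C - A * D) / C, C, D, hC, hD, fun t ht => ?_⟩
  have hden : 0 < C + D * t := by positivity
  rw [hrep t ht]
  field_simp
  ring

lemma div_add_mul_self_le {C D u t : ℝ} (hC : 0 < C) (hD : 0 ≤ D) (hu : 0 ≤ u) (hut : u ≤ t) :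
    u / (C + D * u) ≤ t / (C + D * t) := by
  rw [div_le_div_iff₀ (by positivity) (by nlinarith)]
  nlinarith

lemma mul_div_add_mul_self_le {C D s t : ℝ} (hC : 0 < C) (hD : 0 ≤ D) (hs : 0 ≤ s) (hst : s ≤ t) :
    s * (t / (C + D * t)) ≤ t * (s / (C + D * s)) := by
  rw [mul_div_assoc', mul_div_assoc', mul_comm t s]
  exact div_le_div_of_nonneg_left (mul_nonneg hs (hs.trans hst)) (by positivity) (by nlinarith)

def cylinderLength (m : ℕ) (w : List ℕ) : ℝ :=
  |w.foldr (invBranch m) (th m) - w.foldr (invBranch m) 0|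

lemma volume_image_foldr_invBranch_le (hm : 0 < m) {w : List ℕ} (hw : ∀ k ∈ w, 0 < k) :
    volume (w.foldr (invBranch m) '' Ioo 0 (th m)) ≤ ENNReal.ofReal (cylinderLength m w) := by
  obtain ⟨c, e, C, D, hC, hD, hrep⟩ := exists_foldr_invBranch_eq_add_mul hm hw
  have hθ := th_pos hm
  have hsub : w.foldr (invBranch m) '' Ioo 0 (th m) ⊆
      uIcc (w.foldr (invBranch m) 0) (w.foldr (invBranch m) (th m)) := by
    rintro _ ⟨t, ht, rfl⟩
    dsimp only
    have h0 := div_add_mul_self_le hC hD le_rfl ht.1.le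
    have h1 := div_add_mul_self_le hC hD ht.1.le ht.2.le
    rw [hrep t ht.1.le, hrep 0 le_rfl, hrep _ hθ.le, mem_uIcc]
    rcases le_total 0 e with he | he
    · exact Or.inl ⟨by nlinarith, by nlinarith⟩
    · exact Or.inr ⟨by nlinarith, by nlinarith⟩
  exact (measure_mono hsub).trans_eq Real.volume_interval

lemma abs_sub_eq_of_eq_add_mul {f : ℝ → ℝ} {c e C D : ℝ} (hC : 0 < C) (hD : 0 ≤ D)
    (hf : ∀ t, 0 ≤ t → f t = c + e * (t / (C + D * t))) {u t : ℝ} (hu : 0 ≤ u) (hut : u ≤ t) :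
    |f t - f u| = |e| * (t / (C + D * t) - u / (C + D * u)) := by
  rw [hf t (hu.trans hut), hf u hu, add_sub_add_left_eq_sub, ← mul_sub, abs_mul,
    abs_of_nonneg (sub_nonneg.2 (div_add_mul_self_le hC hD hu hut))]

lemma invBranch_zero (k : ℕ) : invBranch m k 0 = 1 / (k * th m) := by
  simp [invBranch]

lemma invBranch_th (k : ℕ) : invBranch m k (th m) = 1 / ((k + 1 : ℕ) * th m) := by
  rw [invBranch]
  push_cast
  ring

lemma one_div_natCast_mul_th (hm : 0 < m) : 1 / (m * th m) = th m := by
  have := th_pos hm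
  field_simp
  linear_combination (natCast_mul_th_sq hm).symm

lemma natCast_div_add_one_mul_th (hm : 0 < m) (M : ℕ) :
    m / (M + 1 : ℝ) * th m = 1 / ((M + 1 : ℕ) * th m) := by
  have := th_pos hm
  field_simp
  push_cast
  linear_combination (M + 1 : ℝ) * natCast_mul_th_sq hm

/-- The cylinders of `w ++ [k]`, `m ≤ k ≤ M`, tile the image of `[1 / ((M + 1) θ), θ]` under the
cylinder map of `w`; as that map is affine in `t / (C + D t)`, this image has at most the fraction
`1 - m / (M + 1)` of the length of the whole cylinder. -/
lemma sum_cylinderLength_append_le (hm : 0 < m) {w : List ℕ} (hw : ∀ k ∈ w, 0 < k) {M : ℕ}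
    (hM : m ≤ M) :
    ∑ k ∈ Finset.Icc m M, cylinderLength m (w ++ [k]) ≤
      (1 - m / (M + 1 : ℝ)) * cylinderLength m w := by
  obtain ⟨c, e, C, D, hC, hD, hrep⟩ := exists_foldr_invBranch_eq_add_mul hm hw
  have hθ := th_pos hm
  set g : ℝ → ℝ := fun t => t / (C + D * t)
  set h : ℕ → ℝ := fun j => g (1 / (j * th m))
  have hpiece : ∀ k ∈ Finset.Icc m M, cylinderLength m (w ++ [k]) = |e| * (h k - h (k + 1)) := by
    intro k hk
    have hk0 : (0 : ℝ) < k := by exact_mod_cast hm.trans_le (Finset.mem_Icc.1 hk).1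
    have hle : 1 / ((k + 1 : ℕ) * th m) ≤ 1 / (k * th m) :=
      one_div_le_one_div_of_le (by positivity) (by gcongr; simp)
    rw [cylinderLength, List.foldr_append, List.foldr_append, List.foldr_cons, List.foldr_cons,
      List.foldr_nil, List.foldr_nil, invBranch_zero, invBranch_th, abs_sub_comm,
      abs_sub_eq_of_eq_add_mul hC hD hrep (by positivity) hle]
  set s : ℝ := 1 / ((M + 1 : ℕ) * th m) with hs
  have hs0 : 0 ≤ s := by positivity
  have hsθ : s ≤ th m := by
    rw [← one_div_natCast_mul_th hm, hs]
    exact one_div_le_one_div_of_le (by positivity) (by gcongr; exact_mod_cast hM.trans M.le_succ)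
  have htel : ∑ k ∈ Finset.Icc m M, (h k - h (k + 1)) = g (th m) - g s := by
    simp_rw [← neg_sub (h (_ + 1)), Finset.sum_neg_distrib, ← Finset.Ico_add_one_right_eq_Icc,
      Finset.sum_Ico_sub h (by omega : m ≤ M + 1), neg_sub]
    simp only [h, one_div_natCast_mul_th hm, s]
  have hlen : cylinderLength m w = |e| * g (th m) := by
    rw [cylinderLength, abs_sub_eq_of_eq_add_mul hC hD hrep le_rfl hθ.le]
    simp [g]
  have hgs : (m / (M + 1 : ℝ)) * g (th m) ≤ g s := by
    refine le_of_mul_le_mul_left ?_ hθ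
    calc th m * (m / (M + 1 : ℝ) * g (th m)) = s * g (th m) := by
          rw [hs, ← natCast_div_add_one_mul_th hm]
          ring
      _ ≤ th m * g s := mul_div_add_mul_self_le hC hD hs0 hsθ
  rw [Finset.sum_congr rfl hpiece, ← Finset.mul_sum, htel, hlen]
  nlinarith [mul_le_mul_of_nonneg_left hgs (abs_nonneg e)]

end Cylinders

section BoundedDigits

variable {m : ℕ}

/-- Words of length `J` whose `n`-th letter lies in `[m, M n]`. -/
def admissibleWords (m : ℕ) (M : ℕ → ℕ) : ℕ → Finset (List ℕ)
  | 0 => {[]}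
  | J + 1 => (admissibleWords m M J ×ˢ Finset.Icc m (M (J + 1))).image fun wk => wk.1 ++ [wk.2]

lemma le_of_mem_admissibleWords {M : ℕ → ℕ} :
    ∀ {J : ℕ} {w : List ℕ}, w ∈ admissibleWords m M J → ∀ k ∈ w, m ≤ k
  | 0, w, hw => by simp_all [admissibleWords]
  | J + 1, _, hw => by
    obtain ⟨⟨w, k⟩, hwk, rfl⟩ := Finset.mem_image.1 hw
    rw [Finset.mem_product, Finset.mem_Icc] at hwk
    intro j hj
    rcases List.mem_append.1 hj with hj | hj
    · exact le_of_mem_admissibleWords hwk.1 j hj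
    · rw [List.mem_singleton.1 hj]
      exact hwk.2.1

lemma sum_cylinderLength_admissibleWords_le (hm : 0 < m) {M : ℕ → ℕ} (hM : ∀ n, m ≤ M n) :
    ∀ J, ∑ w ∈ admissibleWords m M J, cylinderLength m w ≤
      th m * ∏ i ∈ Finset.range J, (1 - m / (M (i + 1) + 1 : ℝ))
  | 0 => by simp [admissibleWords, cylinderLength, abs_of_pos (th_pos hm)]
  | J + 1 => by
    have hinj : Set.InjOn (fun wk : List ℕ × ℕ => wk.1 ++ [wk.2])
        ↑(admissibleWords m M J ×ˢ Finset.Icc m (M (J + 1))) := fun p _ q _ hpq => by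
      obtain ⟨h1, h2⟩ := List.append_inj' hpq rfl
      exact Prod.ext h1 (List.singleton_inj.1 h2)
    have hfac : 0 ≤ 1 - m / (M (J + 1) + 1 : ℝ) := sub_nonneg.2 (natCast_div_add_one_le_one (hM _))
    calc ∑ w ∈ admissibleWords m M (J + 1), cylinderLength m w
        = ∑ w ∈ admissibleWords m M J, ∑ k ∈ Finset.Icc m (M (J + 1)),
            cylinderLength m (w ++ [k]) := by
          rw [admissibleWords, Finset.sum_image hinj, Finset.sum_product]
      _ ≤ ∑ w ∈ admissibleWords m M J, (1 - m / (M (J + 1) + 1 : ℝ)) * cylinderLength m w :=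
          Finset.sum_le_sum fun w hw => sum_cylinderLength_append_le hm
            (fun k hk => hm.trans_le (le_of_mem_admissibleWords hw k hk)) (hM (J + 1))
      _ ≤ (1 - m / (M (J + 1) + 1 : ℝ)) *
            (th m * ∏ i ∈ Finset.range J, (1 - m / (M (i + 1) + 1 : ℝ))) := by
          rw [← Finset.mul_sum]
          exact mul_le_mul_of_nonneg_left
            (sum_cylinderLength_admissibleWords_le hm hM J) hfac
      _ = th m * ∏ i ∈ Finset.range (J + 1), (1 - m / (M (i + 1) + 1 : ℝ)) := by
          rw [Finset.prod_range_succ]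
          ring

def digitList (m J : ℕ) (x : ℝ) : List ℕ := (List.range J).map fun j => a m (j + 1) x

lemma digitList_succ (J : ℕ) (x : ℝ) :
    digitList m (J + 1) x = digitList m J x ++ [a m (J + 1) x] := by
  simp [digitList, List.range_succ]

lemma a_succ (j : ℕ) (x : ℝ) : a m (j + 1) x = a m 1 ((T m)^[j] x) := by
  simp [a]

lemma foldr_digitList_iterate {x : ℝ} (hx : ∀ j, (T m)^[j] x ∈ Ioo 0 (th m)) :
    ∀ J, (digitList m J x).foldr (invBranch m) ((T m)^[J] x) = x
  | 0 => rfl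
  | J + 1 => by
    rw [digitList_succ, List.foldr_append, List.foldr_cons, List.foldr_nil,
      Function.iterate_succ_apply', a_succ, invBranch_a_one_T (hx J).1.ne']
    exact foldr_digitList_iterate hx J

lemma digitList_mem_admissibleWords (hm : 0 < m) {M : ℕ → ℕ} {x : ℝ}
    (hx : ∀ j, (T m)^[j] x ∈ Ioo 0 (th m)) (hxM : ∀ n, 1 ≤ n → a m n x ≤ M n) :
    ∀ J, digitList m J x ∈ admissibleWords m M J
  | 0 => Finset.mem_singleton_self _
  | J + 1 => by
    rw [digitList_succ, admissibleWords]
    refine Finset.mem_image.2 ⟨(digitList m J x, a m (J + 1) x),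
      Finset.mem_product.2 ⟨?_, Finset.mem_Icc.2 ⟨?_, ?_⟩⟩, rfl⟩
    · exact digitList_mem_admissibleWords hm hx hxM J
    · rw [a_succ]
      exact le_a_one hm (hx J)
    · exact hxM (J + 1) J.succ_pos

/-- For every `J` the set is covered by the cylinders of the admissible words of length `J`. -/
lemma volume_boundedDigits_eq_zero (hm : 0 < m) {M : ℕ → ℕ} (hM : ∀ n, m ≤ M n)
    (hdiv : ¬ Summable fun n => (m / (M n + 1 : ℝ))) :
    volume {x | (∀ j, (T m)^[j] x ∈ Ioo 0 (th m)) ∧ ∀ n, 1 ≤ n → a m n x ≤ M n} = 0 := by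
  have hlim := ENNReal.tendsto_ofReal ((tendsto_prod_one_sub_of_not_summable
    (fun i => by positivity) (fun i => natCast_div_add_one_le_one (hM (i + 1)))
    fun h => hdiv ((summable_nat_add_iff 1).1 h)).const_mul (th m))
  rw [mul_zero, ENNReal.ofReal_zero] at hlim
  refine le_antisymm (ge_of_tendsto' hlim fun J => ?_) bot_le
  calc _ ≤ volume (⋃ w ∈ admissibleWords m M J, w.foldr (invBranch m) '' Ioo 0 (th m)) :=
        measure_mono fun _ hx => mem_biUnion (digitList_mem_admissibleWords hm hx.1 hx.2 J)
          ⟨_, hx.1 J, foldr_digitList_iterate hx.1 J⟩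
    _ ≤ ∑ w ∈ admissibleWords m M J, volume (w.foldr (invBranch m) '' Ioo 0 (th m)) :=
        measure_biUnion_finset_le _ _
    _ ≤ ∑ w ∈ admissibleWords m M J, ENNReal.ofReal (cylinderLength m w) :=
        Finset.sum_le_sum fun w hw => volume_image_foldr_invBranch_le hm
          fun k hk => hm.trans_le (le_of_mem_admissibleWords hw k hk)
    _ = ENNReal.ofReal (∑ w ∈ admissibleWords m M J, cylinderLength m w) :=
        (ENNReal.ofReal_sum_of_nonneg fun _ _ => abs_nonneg _).symm
    _ ≤ _ := ENNReal.ofReal_le_ofReal (sum_cylinderLength_admissibleWords_le hm hM J)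

end BoundedDigits

section Terminating

variable {m : ℕ}

lemma mem_range_foldr_invBranch_zero (hm : 0 < m) : ∀ (J : ℕ) {x : ℝ}, x ∈ Ioo 0 (th m) →
    (T m)^[J] x ∉ Ioo 0 (th m) → x ∈ range fun w : List ℕ => w.foldr (invBranch m) 0
  | 0, _, hx, hJ => absurd hx hJ
  | J + 1, x, hx, hJ => by
    rw [Function.iterate_succ_apply] at hJ
    rw [← invBranch_a_one_T (m := m) hx.1.ne']
    rcases (T_mem_Ico hm hx).1.eq_or_lt with h0 | hpos
    · exact ⟨[a m 1 x], by simp [h0]⟩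
    · obtain ⟨w, hw⟩ := mem_range_foldr_invBranch_zero hm J ⟨hpos, (T_mem_Ico hm hx).2⟩ hJ
      exact ⟨a m 1 x :: w, by simp [hw]⟩

lemma countable_setOf_exists_iterate_notMem (hm : 0 < m) :
    {x | x ∈ Ioo 0 (th m) ∧ ∃ j, (T m)^[j] x ∉ Ioo 0 (th m)}.Countable :=
  (countable_range _).mono fun _ ⟨hx, j, hj⟩ => mem_range_foldr_invBranch_zero hm j hx hj

end Terminating

lemma exists_le_floor_add_of_finite {p : ℕ → Prop} {f : ℕ → ℕ} {g : ℕ → ℝ}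
    (h : {n | p n ∧ g n < f n}.Finite) : ∃ P : ℕ, ∀ n, p n → f n ≤ ⌊g n⌋₊ + P := by
  refine ⟨∑ n ∈ h.toFinset, f n, fun n hn => ?_⟩
  by_cases hlt : g n < f n
  · exact (Finset.single_le_sum (fun _ _ => Nat.zero_le _) (h.mem_toFinset.2 ⟨hn, hlt⟩)).trans
      (Nat.le_add_left _ _)
  · exact (Nat.le_floor (not_lt.1 hlt)).trans (Nat.le_add_right _ _)

lemma not_summable_div_floor_mul_log_add {m : ℕ} (hm : 0 < m) (P : ℕ) :
    ¬ Summable fun n : ℕ => (m / ((⌊(n : ℝ) * log n⌋₊ + P + m : ℕ) + 1 : ℝ)) := by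
  intro h
  apply not_summable_inv_mul_log
  refine Summable.of_norm_bounded_eventually_nat (h.mul_left ((P + m + 2 : ℝ) / m)) ?_
  filter_upwards [eventually_ge_atTop 3] with n hn
  have hn3 : (3 : ℝ) ≤ n := by exact_mod_cast hn
  have hlog : 1 ≤ log n := by
    rw [le_log_iff_exp_le (by linarith)]
    linarith [exp_one_lt_d9]
  have hnl : 1 ≤ (n : ℝ) * log n := by nlinarith
  have hfl : (⌊(n : ℝ) * log n⌋₊ : ℝ) ≤ n * log n := Nat.floor_le (by linarith)
  have hm' : (0 : ℝ) < m := by exact_mod_cast hm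
  rw [norm_of_nonneg (by positivity)]
  push_cast
  calc ((n : ℝ) * log n)⁻¹ = (P + m + 2) / ((P + m + 2) * (n * log n)) := by field_simp
    _ ≤ (P + m + 2) / (⌊(n : ℝ) * log n⌋₊ + P + m + 1) :=
        div_le_div_of_nonneg_left (by positivity) (by positivity) (by nlinarith)
    _ = (P + m + 2) / m * (m / (⌊(n : ℝ) * log n⌋₊ + P + m + 1)) := by field_simp

/-- For a.e. x ∈ (0,θ), a_n(x) > n·log n for infinitely many n. -/
theorem stmt_10 (m : ℕ) (hm : 2 ≤ m) :
    ∀ᵐ x ∂(volume.restrict (Set.Ioo 0 (th m))),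
      {n : ℕ | 1 ≤ n ∧ (n : ℝ) * Real.log n < (a m n x : ℝ)}.Infinite := by
  have hm0 : 0 < m := by omega
  rw [ae_restrict_iff' measurableSet_Ioo, ae_iff]
  refine measure_mono_null (fun x hx => ?_) (measure_union_null
    ((countable_setOf_exists_iterate_notMem hm0).measure_zero volume)
    (measure_iUnion_null fun P => volume_boundedDigits_eq_zero
      (M := fun n => ⌊(n : ℝ) * log n⌋₊ + P + m) hm0 (fun n => Nat.le_add_left _ _)
      (not_summable_div_floor_mul_log_add hm0 P)))
  obtain ⟨hxI, hfin⟩ := Classical.not_imp.1 hx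
  by_cases horbit : ∀ j, (T m)^[j] x ∈ Ioo 0 (th m)
  · obtain ⟨P, hP⟩ := exists_le_floor_add_of_finite (Set.not_infinite.1 hfin)
    exact Or.inr (mem_iUnion.2 ⟨P, horbit, fun n hn => (hP n hn).trans (Nat.le_add_right _ _)⟩)
  · exact Or.inl ⟨hxI, not_forall.1 horbit⟩

end Theta
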